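/- Let k ≥ 2 and p = p_1 + ... + p_k. Let Σ ∈ R^{p×p} be the symmetric block matrix with diagonal blocks Σ_{ii} = U_i U_i^T + Ψ_{ii} and off-diagonal blocks Σ_{ij} = U_i U_j^T (i ≠ j), where U_i ∈ R^{p_i×r} and each Ψ_{ii} ∈ R^{p_i×p_i} is symmetric positive definite, and let Σ0 = diag(Σ_{11},...,Σ_{kk}) be its block-diagonal part. Let A = [A_1^T, ..., A_k^T]^T ∈ R^{p×r} (with A_i ∈ R^{p_i×r}) satisfy Σ0^{-1} Σ A = A Λ_r and A^T Σ0 A = I_r, where Λ_r = diag(λ_1, ..., λ_r) contains the r largest generalized eigenvalues of Σ with respect to Σ0. If λ_r > 1, then for every i ∈ {1,...,k} the column space of A_i is contained in the column space of Σ_{ii}^{-1} U_i; moreover, for any i such that rank(A_i) = r, the two column spaces are equal. -/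

import Mathlib

open MeasureTheory ProbabilityTheory Matrix Real
open scoped Classical

noncomputable section

/-- Frobenius norm of a real matrix. -/
def frob {m n : ℕ} (M : Matrix (Fin m) (Fin n) ℝ) : ℝ :=
  Real.sqrt (∑ i, ∑ j, (M i j) ^ 2)

/-- Distance between `p × r` matrices modulo right multiplication by an orthogonal matrix:
`dist(U,V) = min_{P ∈ O(r)} ‖U P - V‖_F`. -/
def gdist {p r : ℕ} (U V : Matrix (Fin p) (Fin r) ℝ) : ℝ :=
  sInf {x : ℝ | ∃ P : Matrix (Fin r) (Fin r) ℝ, Pᵀ * P = 1 ∧ x = frob (U * P - V)}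

/-- Centered multivariate Gaussian with covariance `S`, as the law of `S^{1/2} z` for a
standard Gaussian vector `z`. -/
def mvGaussian {m : ℕ} (S : Matrix (Fin m) (Fin m) ℝ) : Measure (Fin m → ℝ) :=
  if h : S.PosSemidef then
    (Measure.pi fun _ : Fin m => gaussianReal 0 1).map fun z => ((h.1.eigenvectorUnitary : Matrix (Fin m) (Fin m) ℝ) *
      Matrix.diagonal (fun i => Real.sqrt (h.1.eigenvalues i)) *
      (star h.1.eigenvectorUnitary : Matrix (Fin m) (Fin m) ℝ)).mulVec z
  else 0

/-- Law of `n` i.i.d. samples from `N_m(0, S)`. -/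
def iidLaw (n : ℕ) {m : ℕ} (S : Matrix (Fin m) (Fin m) ℝ) : Measure (Fin n → Fin m → ℝ) :=
  Measure.pi fun _ : Fin n => mvGaussian S

def sampleMean {n m : ℕ} (X : Fin n → Fin m → ℝ) (i : Fin m) : ℝ := (∑ t, X t i) / n

/-- Sample covariance matrix. -/
def sampleCov {n m : ℕ} (X : Fin n → Fin m → ℝ) : Matrix (Fin m) (Fin m) ℝ :=
  Matrix.of fun i j => (∑ t, (X t i - sampleMean X i) * (X t j - sampleMean X j)) / n

/-- Block-diagonal part of a matrix with respect to block labels `β`. -/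
def blockPart {m k : ℕ} (β : Fin m → Fin k) (M : Matrix (Fin m) (Fin m) ℝ) :
    Matrix (Fin m) (Fin m) ℝ :=
  Matrix.of fun i j => if β i = β j then M i j else 0

/-- Rows of `M` belonging to block `i`, all other rows zeroed out. -/
def restrictRows {m k c : ℕ} (β : Fin m → Fin k) (i : Fin k) (M : Matrix (Fin m) (Fin c) ℝ) :
    Matrix (Fin m) (Fin c) ℝ :=
  Matrix.of fun a b => if β a = i then M a b else 0

/-- ℓ₂ norm of row `i` of `M`. -/
def rowNorm {m r : ℕ} (M : Matrix (Fin m) (Fin r) ℝ) (i : Fin m) : ℝ :=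
  Real.sqrt (∑ j, (M i j) ^ 2)

/-- Set of indices of nonzero rows. -/
def rowSupport {m r : ℕ} (M : Matrix (Fin m) (Fin r) ℝ) : Set (Fin m) := {i | M i ≠ 0}

/-- `W'` is the hard thresholding of `W` keeping the `k` rows of largest ℓ₂ norm
(ties broken toward smaller indices). -/
def IsHT {m r : ℕ} (W : Matrix (Fin m) (Fin r) ℝ) (k : ℕ) (W' : Matrix (Fin m) (Fin r) ℝ) : Prop :=
  ∃ C : Finset (Fin m), C.card = min k m ∧ (∀ i ∈ C, W' i = W i) ∧ (∀ i ∉ C, W' i = 0) ∧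
    ∀ i ∈ C, ∀ j ∉ C, rowNorm W j < rowNorm W i ∨ (rowNorm W j = rowNorm W i ∧ i < j)

/-- Positive semidefinite square root (junk value `0` if not psd). -/
def psqrt {r : ℕ} (M : Matrix (Fin r) (Fin r) ℝ) : Matrix (Fin r) (Fin r) ℝ :=
  if h : M.PosSemidef then
    (h.1.eigenvectorUnitary : Matrix (Fin r) (Fin r) ℝ) *
      Matrix.diagonal (fun i => Real.sqrt (h.1.eigenvalues i)) *
      (star h.1.eigenvectorUnitary : Matrix (Fin r) (Fin r) ℝ)
  else 0

/-- Inverse square root. -/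
def invSqrt {r : ℕ} (M : Matrix (Fin r) (Fin r) ℝ) : Matrix (Fin r) (Fin r) ℝ := (psqrt M)⁻¹

/-- Nuclear norm `Tr √(Mᵀ M)`. -/
def nucNorm {a b : ℕ} (M : Matrix (Fin a) (Fin b) ℝ) : ℝ := (psqrt (Mᵀ * M)).trace

/-- Entrywise ℓ₁ norm. -/
def l1Norm {a b : ℕ} (M : Matrix (Fin a) (Fin b) ℝ) : ℝ := ∑ i, ∑ j, |M i j|

/-- Entrywise sup norm. -/
def maxAbs {a b : ℕ} (M : Matrix (Fin a) (Fin b) ℝ) : ℝ := sSup {x : ℝ | ∃ i j, x = |M i j|}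

/-- Membership in the Fantope `{X : 0 ⪯ X ⪯ I, Tr X = r}`. -/
def InFantope {p : ℕ} (r : ℕ) (X : Matrix (Fin p) (Fin p) ℝ) : Prop :=
  X.PosSemidef ∧ (1 - X).PosSemidef ∧ X.trace = (r : ℝ)

/-- `F` minimizes `-⟨Sh, ·⟩ + ρ ‖·‖_1` over symmetric matrices whose conjugation by
`S0h^{1/2}` lies in the Fantope. -/
def IsFantopeMin {p : ℕ} (r : ℕ) (Sh S0h : Matrix (Fin p) (Fin p) ℝ) (ρ : ℝ)
    (F : Matrix (Fin p) (Fin p) ℝ) : Prop :=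
  F.IsSymm ∧ InFantope r (psqrt S0h * F * psqrt S0h) ∧
    ∀ G : Matrix (Fin p) (Fin p) ℝ, G.IsSymm → InFantope r (psqrt S0h * G * psqrt S0h) →
      -(Shᵀ * F).trace + ρ * l1Norm F ≤ -(Shᵀ * G).trace + ρ * l1Norm G

/-- `L` maximizes `⟨Sh, L Lᵀ⟩` subject to `Lᵀ S0h L = I_r` and row support inside `I`. -/
def IsRestrictedMax {p r : ℕ} (Sh S0h : Matrix (Fin p) (Fin p) ℝ) (I : Finset (Fin p))
    (L : Matrix (Fin p) (Fin r) ℝ) : Prop :=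
  Lᵀ * S0h * L = 1 ∧ (∀ i ∉ I, L i = 0) ∧
    ∀ L' : Matrix (Fin p) (Fin r) ℝ, L'ᵀ * S0h * L' = 1 → (∀ i ∉ I, L' i = 0) →
      (Shᵀ * (L' * L'ᵀ)).trace ≤ (Shᵀ * (L * Lᵀ)).trace

/-- Kullback–Leibler divergence `∫ log (dP/dQ) dP`. -/
def klDivR {α : Type*} [MeasurableSpace α] (P Q : Measure α) : ℝ :=
  ∫ x, Real.log (P.rnDeriv Q x).toReal ∂P

/-!
Subtracting `S0 A` from the eigen-equation `S A = S0 A Λ` gives `S0 A (Λ - 1) = (S - S0) A`, and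
`S - S0` is the off-block-diagonal part of `U Uᵀ`, whose `i`-th row block times `A` is
`U_i (Σ_{j ≠ i} U_jᵀ A_j)`. As `S0` is block diagonal and `Λ - 1` is invertible when `λ_r > 1`,
this gives `A_i = Σ_ii⁻¹ U_i C` with `C = (Σ_{j ≠ i} U_jᵀ A_j) (Λ - 1)⁻¹`. If `A_i` has rank `r`,
the `r × r` matrix `C` has rank `r` too and can be inverted.
-/

section BlockDiagonal

variable {m k c : ℕ} (β : Fin m → Fin k)

lemma blockPart_apply_eq_zero {B : Matrix (Fin m) (Fin m) ℝ} (hB : blockPart β B = B)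
    {a b : Fin m} (h : β a ≠ β b) : B a b = 0 := by
  rw [← hB]; simp [blockPart, h]

lemma blockPart_blockPart (M : Matrix (Fin m) (Fin m) ℝ) :
    blockPart β (blockPart β M) = blockPart β M := by
  ext a b; by_cases h : β a = β b <;> simp [blockPart, h]

lemma blockPart_add (M N : Matrix (Fin m) (Fin m) ℝ) :
    blockPart β (M + N) = blockPart β M + blockPart β N := by
  ext a b; by_cases h : β a = β b <;> simp [blockPart, h]

lemma blockPart_eq_sum_diagonal_mul_mul_diagonal (M : Matrix (Fin m) (Fin m) ℝ) :
    blockPart β M = ∑ i, diagonal (fun a => if β a = i then 1 else 0) * M *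
      diagonal (fun a => if β a = i then 1 else 0) := by
  ext a b
  simp only [blockPart, Matrix.sum_apply, diagonal_mul, mul_diagonal, of_apply]
  split_ifs with h <;> simp [h, ite_mul, mul_ite]

lemma posSemidef_blockPart {M : Matrix (Fin m) (Fin m) ℝ} (hM : M.PosSemidef) :
    (blockPart β M).PosSemidef := by
  rw [blockPart_eq_sum_diagonal_mul_mul_diagonal]
  refine posSemidef_sum _ fun i _ => ?_
  simpa using hM.mul_mul_conjTranspose_same (diagonal fun a => if β a = i then (1 : ℝ) else 0)

lemma mul_restrictRows_of_blockPart_eq {B : Matrix (Fin m) (Fin m) ℝ} (hB : blockPart β B = B)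
    (i : Fin k) (M : Matrix (Fin m) (Fin c) ℝ) :
    B * restrictRows β i M = restrictRows β i (B * M) := by
  ext a b
  simp only [restrictRows, of_apply, mul_apply]
  split_ifs with ha
  · refine Finset.sum_congr rfl fun x _ => ?_
    split_ifs with hx
    · rfl
    · rw [blockPart_apply_eq_zero β hB (by rwa [ha, ne_comm]), zero_mul, zero_mul]
  · refine Finset.sum_eq_zero fun x _ => ?_
    split_ifs with hx
    · rw [blockPart_apply_eq_zero β hB (by rwa [hx]), zero_mul]
    · rw [mul_zero]

lemma restrictRows_mul {d : ℕ} (i : Fin k) (M : Matrix (Fin m) (Fin c) ℝ)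
    (N : Matrix (Fin c) (Fin d) ℝ) :
    restrictRows β i (M * N) = restrictRows β i M * N := by
  ext a b
  by_cases h : β a = i <;> simp [restrictRows, h, mul_apply]

lemma restrictRows_sub (i : Fin k) (M N : Matrix (Fin m) (Fin c) ℝ) :
    restrictRows β i (M - N) = restrictRows β i M - restrictRows β i N := by
  ext a b; by_cases h : β a = i <;> simp [restrictRows, h]

lemma restrictRows_blockPart_mul_transpose (i : Fin k) (U : Matrix (Fin m) (Fin c) ℝ) :
    restrictRows β i (blockPart β (U * Uᵀ)) =
      restrictRows β i U * (restrictRows β i U)ᵀ := by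
  ext a b
  by_cases ha : β a = i <;> by_cases hb : β b = i <;>
    simp [restrictRows, blockPart, mul_apply, ha, hb, eq_comm (a := i)]

lemma restrictRows_sub_blockPart_mul {d : ℕ} (i : Fin k) (U : Matrix (Fin m) (Fin c) ℝ)
    (A : Matrix (Fin m) (Fin d) ℝ) :
    restrictRows β i ((U * Uᵀ - blockPart β (U * Uᵀ)) * A) =
      restrictRows β i U * ((Uᵀ - (restrictRows β i U)ᵀ) * A) := by
  rw [restrictRows_mul, restrictRows_sub, restrictRows_mul, restrictRows_blockPart_mul_transpose,
    ← Matrix.mul_sub, Matrix.mul_assoc]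

theorem restrictRows_eq_restrictRows_inv_mul_mul {r d : ℕ} {S0 : Matrix (Fin m) (Fin m) ℝ}
    (hS0 : blockPart β S0 = S0) (hS0det : IsUnit S0.det) (U : Matrix (Fin m) (Fin r) ℝ)
    {A : Matrix (Fin m) (Fin d) ℝ} {D : Matrix (Fin d) (Fin d) ℝ} (hDdet : IsUnit (D - 1).det)
    (hA : (S0 + (U * Uᵀ - blockPart β (U * Uᵀ))) * A = S0 * A * D) (i : Fin k) :
    restrictRows β i A =
      restrictRows β i (S0⁻¹ * U) * ((Uᵀ - (restrictRows β i U)ᵀ) * A * (D - 1)⁻¹) := by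
  set W := (Uᵀ - (restrictRows β i U)ᵀ) * A
  have hAD : S0 * restrictRows β i A * (D - 1) = restrictRows β i U * W := by
    rw [mul_restrictRows_of_blockPart_eq β hS0, ← restrictRows_mul,
      ← restrictRows_sub_blockPart_mul, Matrix.mul_sub, Matrix.mul_one, ← hA, Matrix.add_mul,
      add_sub_cancel_left]
  have hU : S0 * restrictRows β i (S0⁻¹ * U) = restrictRows β i U := by
    rw [mul_restrictRows_of_blockPart_eq β hS0, mul_nonsing_inv_cancel_left _ _ hS0det]
  calc restrictRows β i A
      = S0⁻¹ * (S0 * restrictRows β i A * (D - 1)) * (D - 1)⁻¹ := by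
        rw [← Matrix.mul_assoc S0⁻¹, mul_nonsing_inv_cancel_right _ _ hDdet,
          nonsing_inv_mul_cancel_left _ _ hS0det]
    _ = S0⁻¹ * (S0 * restrictRows β i (S0⁻¹ * U) * W) * (D - 1)⁻¹ := by rw [hAD, hU]
    _ = restrictRows β i (S0⁻¹ * U) * (W * (D - 1)⁻¹) := by
        rw [Matrix.mul_assoc S0, nonsing_inv_mul_cancel_left _ _ hS0det, Matrix.mul_assoc]

end BlockDiagonal

lemma isUnit_of_rank_eq_card {n K : Type*} [Fintype n] [DecidableEq n] [Field K]
    {C : Matrix n n K} (h : C.rank = Fintype.card n) : IsUnit C := by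
  rw [← isUnit_toLin'_iff, LinearMap.isUnit_iff_range_eq_top]
  apply Submodule.eq_top_of_finrank_eq
  rw [Module.finrank_fintype_fun_eq_card, ← h, rank, toLin'_apply']

lemma exists_eq_mul_of_eq_mul_of_rank_eq_card {m n K : Type*} [Fintype n] [DecidableEq n]
    [Field K] {M N : Matrix m n K} {C : Matrix n n K} (h : M = N * C)
    (hM : M.rank = Fintype.card n) : ∃ D : Matrix n n K, N = M * D := by
  have hC : C.rank = Fintype.card n :=
    le_antisymm C.rank_le_card_width (hM ▸ h ▸ rank_mul_le_right N C)
  have hCdet : IsUnit C.det := (isUnit_iff_isUnit_det C).1 (isUnit_of_rank_eq_card hC)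
  exact ⟨C⁻¹, by rw [h, mul_nonsing_inv_cancel_right _ _ hCdet]⟩

/-- identification of the GCA loading spaces in the latent variable model. -/
theorem statement0
    (k p r : ℕ) (hr : 1 ≤ r) (hrp : r ≤ p)
    (β : Fin p → Fin k)
    (U : Matrix (Fin p) (Fin r) ℝ)
    (Ψ : Matrix (Fin p) (Fin p) ℝ) (hΨblock : blockPart β Ψ = Ψ) (hΨpd : Ψ.PosDef)
    (S S0 : Matrix (Fin p) (Fin p) ℝ)
    (hS : S = U * Uᵀ + Ψ) (hS0 : S0 = blockPart β S)
    -- generalized eigendecomposition of `S` w.r.t. `S0`, eigenvalues sorted decreasingly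
    (lam : Fin p → ℝ) (hlam : Antitone lam)
    -- `A` carries the `r` leading generalized eigenvalues and is `S0`-orthonormal
    (A : Matrix (Fin p) (Fin r) ℝ)
    (hA1 : S0⁻¹ * S * A = A * Matrix.diagonal (fun j : Fin r => lam (Fin.castLE hrp j)))
    (hgt1 : 1 < lam ⟨r - 1, by omega⟩) :
    (∀ i : Fin k, ∃ Cmat : Matrix (Fin r) (Fin r) ℝ,
        restrictRows β i A = restrictRows β i (S0⁻¹ * U) * Cmat) ∧
    (∀ i : Fin k, (restrictRows β i A).rank = r →
      ∃ Dmat : Matrix (Fin r) (Fin r) ℝ,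
        restrictRows β i (S0⁻¹ * U) = restrictRows β i A * Dmat) := by
  set D := diagonal fun j : Fin r => lam (Fin.castLE hrp j)
  have hS0block : blockPart β S0 = S0 := hS0 ▸ blockPart_blockPart β S
  have hS0pd : S0.PosDef := by
    rw [hS0, hS, blockPart_add, hΨblock]
    exact PosDef.posSemidef_add
      (posSemidef_blockPart β (by simpa using posSemidef_self_mul_conjTranspose U)) hΨpd
  have hS0det : IsUnit S0.det := (isUnit_iff_isUnit_det S0).1 hS0pd.isUnit
  have hSS0 : S = S0 + (U * Uᵀ - blockPart β (U * Uᵀ)) := by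
    rw [hS0, hS, blockPart_add, hΨblock]; abel
  have hSA : S * A = S0 * A * D := by
    rw [Matrix.mul_assoc, ← hA1, Matrix.mul_assoc, mul_nonsing_inv_cancel_left _ _ hS0det]
  have hDdet : IsUnit (D - 1).det := by
    rw [← diagonal_one, diagonal_sub, det_diagonal, isUnit_iff_ne_zero]
    refine Finset.prod_ne_zero_iff.2 fun j _ => sub_ne_zero.2 (ne_of_gt ?_)
    exact hgt1.trans_le (hlam (by simp [Fin.le_def]; omega))
  have hblock := restrictRows_eq_restrictRows_inv_mul_mul β hS0block hS0det U hDdet (hSS0 ▸ hSA)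
  exact ⟨fun i => ⟨_, hblock i⟩,
    fun i hi => exists_eq_mul_of_eq_mul_of_rank_eq_card (hblock i) (by simpa using hi)⟩

end
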